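/- A symmetric bijection between subsets of α has small symmetric difference from the identity: if X, Y ⊆ α, f : X → Y is a bijection, and (S, T) is a pair consisting of a small set S of elements of α and a small set T of pairwise disjoint near-litters such that every ρ ∈ G fixing every element of S and fixing every near-litter in T setwise satisfies ρ '' X = X and f(ρ(x)) = ρ(f(x)) for all x ∈ X, then the set {x ∈ X : f(x) ≠ x} is small. -/

import Mathlib

open Cardinal Set

universe u

namespace NFPaper

variable {α : Type u}

/-- A set is small if its cardinality is less than `κ`. -/
def SmallSet (κ : Cardinal.{u}) {β : Type u} (s : Set β) : Prop := #s < κ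

/-- A near-litter: a subset of `α` whose symmetric difference with some litter
(member of the litter partition `ℒ`) is small. -/
def IsNearLitter (κ : Cardinal.{u}) (ℒ : Set (Set α)) (N : Set α) : Prop :=
  ∃ L ∈ ℒ, SmallSet κ (symmDiff N L)

/-- Membership in the group `G` of all permutations of `α` under which the image of
every litter is a near-litter. -/
def Allowable (κ : Cardinal.{u}) (ℒ : Set (Set α)) (ρ : Equiv.Perm α) : Prop :=
  ∀ L ∈ ℒ, IsNearLitter κ ℒ (ρ '' L)

/-!
If `f` moved `κ` many points of `X`, then, since `S` is small, `κ` is regular, and a point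
lies in at most one of the fewer than `κ` disjoint near-litters of `T`, a pigeonhole argument
yields `κ` many such points outside `S` that lie in the same near-litters of `T`. For two of them, `a` and `b` with `b ≠ f a`, the transposition `swap a b` moves only
finitely many points, hence is allowable, and it fixes `S` pointwise and `T` setwise; but it
does not commute with `f` at `a`, since `f` is injective on `X`.
-/

lemma symmDiff_image_subset_setOf_apply_ne (ρ : Equiv.Perm α) (L : Set α) :
    symmDiff (ρ '' L) L ⊆ {x | ρ x ≠ x} := by
  rintro x (⟨⟨y, hyL, rfl⟩, hxL⟩ | ⟨hxL, hx⟩) hfix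
  · exact hxL ((ρ.injective hfix).symm ▸ hyL)
  · exact hx ⟨x, hxL, hfix⟩

lemma allowable_of_smallSet_setOf_apply_ne {κ : Cardinal.{u}} {ℒ : Set (Set α)}
    {ρ : Equiv.Perm α} (h : SmallSet κ {x | ρ x ≠ x}) : Allowable κ ℒ ρ :=
  fun L hL => ⟨L, hL, (mk_le_mk_of_subset (symmDiff_image_subset_setOf_apply_ne ρ L)).trans_lt h⟩

lemma allowable_swap [DecidableEq α] {κ : Cardinal.{u}} (hκ : ℵ₀ < κ) (ℒ : Set (Set α))
    (a b : α) : Allowable κ ℒ (Equiv.swap a b) := by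
  refine allowable_of_smallSet_setOf_apply_ne (((toFinite {a, b}).subset ?_).lt_aleph0.trans hκ)
  intro x hx
  by_contra hxab
  simp only [mem_insert_iff, mem_singleton_iff, not_or] at hxab
  exact hx (Equiv.swap_apply_of_ne_of_ne hxab.1 hxab.2)

lemma image_swap_eq_self [DecidableEq α] {a b : α} {N : Set α} (h : a ∈ N ↔ b ∈ N) :
    Equiv.swap a b '' N = N := by
  ext x
  rw [mem_image_equiv, Equiv.symm_swap, Equiv.swap_apply_def]
  split_ifs <;> simp_all

lemma apply_swap_ne_swap_apply [DecidableEq α] {f : α → α} {X : Set α} (hf : InjOn f X)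
    {a b : α} (ha : a ∈ X) (hb : b ∈ X) (hab : a ≠ b) (hfa : f a ≠ a) (hfab : f a ≠ b) :
    f (Equiv.swap a b a) ≠ Equiv.swap a b (f a) := by
  rw [Equiv.swap_apply_left, Equiv.swap_apply_of_ne_of_ne hfa hfab]
  exact fun h => hab (hf hb ha h).symm

lemma le_mk_sdiff_of_smallSet {κ : Cardinal.{u}} (hκ : ℵ₀ ≤ κ) {B S : Set α} (hB : κ ≤ #B)
    (hS : SmallSet κ S) : κ ≤ #(B \ S : Set α) := by
  by_contra! h
  exact hB.not_gt ((le_mk_sdiff_add_mk B S).trans_lt (add_lt_of_lt hκ h hS))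

def memPattern (T : Set (Set α)) (x : α) : Set (Set α) := {N ∈ T | x ∈ N}

lemma memPattern_mem_insert_empty_image_singleton {T : Set (Set α)} (hT : T.Pairwise Disjoint)
    (x : α) : memPattern T x ∈ insert ∅ (singleton '' T) := by
  by_cases hx : ∃ N ∈ T, x ∈ N
  · obtain ⟨N, hN, hxN⟩ := hx
    refine mem_insert_of_mem _ ⟨N, hN, ?_⟩
    ext M
    refine ⟨?_, fun ⟨hM, hxM⟩ => ?_⟩
    · rintro rfl
      exact ⟨hN, hxN⟩
    · exact PairwiseDisjoint.elim_set (f := id) hT hM hN x hxM hxN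
  · exact Or.inl (eq_empty_of_forall_notMem fun N ⟨hN, hxN⟩ => hx ⟨N, hN, hxN⟩)

lemma exists_subset_le_mk_mem_iff {κ : Cardinal.{u}} (hκ : κ.IsRegular) {T : Set (Set α)}
    (hT : T.Pairwise Disjoint) (hTκ : SmallSet κ T) {B : Set α} (hB : κ ≤ #B) :
    ∃ F ⊆ B, κ ≤ #F ∧ ∀ N ∈ T, ∀ x ∈ F, ∀ y ∈ F, x ∈ N ↔ y ∈ N := by
  have hpatterns : #(insert ∅ (singleton '' T) : Set (Set (Set α))) < κ.ord.cof := by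
    rw [hκ.cof_ord]
    exact mk_insert_le.trans_lt <| add_lt_of_lt hκ.aleph0_le (mk_image_le.trans_lt hTκ)
      (one_lt_aleph0.trans_le hκ.aleph0_le)
  obtain ⟨P, F, hFB, hκF, hFP⟩ := infinite_pigeonhole_set
    (fun x : B => (⟨memPattern T x, memPattern_mem_insert_empty_image_singleton hT x⟩ :
      ↥(insert ∅ (singleton '' T)))) κ hB hκ.aleph0_le hpatterns
  refine ⟨F, hFB, hκF, fun N hN x hx y hy => ?_⟩
  have hxy : memPattern T x = memPattern T y := congrArg Subtype.val ((hFP hx).trans (hFP hy).symm)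
  simpa [memPattern, hN] using Set.ext_iff.mp hxy N

theorem symmetric_bijection_near_identity_general
    (κ : Cardinal.{u}) (hreg : κ.IsRegular) (hunc : ℵ₀ < κ)
    (α : Type u) (ℒ : Set (Set α))
    (X Y : Set α) (f : α → α) (hf : Set.BijOn f X Y)
    (S : Set α) (T : Set (Set α))
    (hS : SmallSet κ S)
    (hTdisj : T.Pairwise Disjoint) (hTsmall : SmallSet κ T)
    (hsupp : ∀ ρ : Equiv.Perm α, Allowable κ ℒ ρ →
      (∀ a ∈ S, ρ a = a) → (∀ N ∈ T, ρ '' N = N) →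
      ρ '' X = X ∧ ∀ x ∈ X, f (ρ x) = ρ (f x)) :
    SmallSet κ {x | x ∈ X ∧ f x ≠ x} := by
  classical
  by_contra hB
  obtain ⟨F, hFB, hκF, hF⟩ := exists_subset_le_mk_mem_iff hreg hTdisj hTsmall
    (le_mk_sdiff_of_smallSet hreg.aleph0_le (not_lt.mp hB) hS)
  have hFinf : F.Infinite := infinite_coe_iff.mp (infinite_iff.mpr (hunc.le.trans hκF))
  obtain ⟨a, haF⟩ := hFinf.nonempty
  obtain ⟨b, hbF, hb⟩ := (hFinf.sdiff (toFinite {a, f a})).nonempty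
  simp only [mem_insert_iff, mem_singleton_iff, not_or] at hb
  obtain ⟨⟨haX, hfa⟩, haS⟩ := hFB haF
  obtain ⟨⟨hbX, -⟩, hbS⟩ := hFB hbF
  have hfixS : ∀ x ∈ S, Equiv.swap a b x = x := fun x hx =>
    Equiv.swap_apply_of_ne_of_ne (ne_of_mem_of_not_mem hx haS) (ne_of_mem_of_not_mem hx hbS)
  have hfixT : ∀ N ∈ T, Equiv.swap a b '' N = N := fun N hN =>
    image_swap_eq_self (hF N hN a haF b hbF)
  exact apply_swap_ne_swap_apply hf.injOn haX hbX (Ne.symm hb.1) hfa (Ne.symm hb.2)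
    ((hsupp _ (allowable_swap hunc ℒ a b) hfixS hfixT).2 a haX)

/-- A symmetric bijection between subsets of `α` has small symmetric difference from
the identity: if `f` maps `X` bijectively onto `Y`, and `(S, T)` is a pair consisting
of a small set `S` of elements of `α` and a small set `T` of pairwise disjoint
near-litters such that every allowable permutation `ρ` fixing every element of `S` and
every near-litter in `T` setwise satisfies `ρ '' X = X` and `f (ρ x) = ρ (f x)` for
all `x ∈ X`, then `{x ∈ X | f x ≠ x}` is small. -/
theorem symmetric_bijection_near_identity
    (κ : Cardinal.{u}) (hreg : κ.IsRegular) (hunc : ℵ₀ < κ)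
    (α : Type u) (ℒ : Set (Set α)) (hpart : Setoid.IsPartition ℒ)
    (hsize : ∀ L ∈ ℒ, #L = κ)
    (X Y : Set α) (f : α → α) (hf : Set.BijOn f X Y)
    (S : Set α) (T : Set (Set α))
    (hS : SmallSet κ S) (hT : ∀ N ∈ T, IsNearLitter κ ℒ N)
    (hTdisj : T.Pairwise Disjoint) (hTsmall : SmallSet κ T)
    (hsupp : ∀ ρ : Equiv.Perm α, Allowable κ ℒ ρ →
      (∀ a ∈ S, ρ a = a) → (∀ N ∈ T, ρ '' N = N) →
      ρ '' X = X ∧ ∀ x ∈ X, f (ρ x) = ρ (f x)) :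
    SmallSet κ {x | x ∈ X ∧ f x ≠ x} :=
  symmetric_bijection_near_identity_general κ hreg hunc α ℒ X Y f hf S T hS hTdisj hTsmall hsupp

end NFPaper
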